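/- Fix t ≠ 0 and r > 0. Define s(t', r') ≥ 0 as the unique nonnegative real with cosh(s(t', r')) = cosh r' · cosh t', and β(t', r') = arcsin( sinh r' / sinh(s(t', r')) ). Let s_t, β_t denote the partial derivatives of s and β with respect to the first variable at (t, r), and s_r, β_r the partial derivatives with respect to the second variable at (t, r). Then sinh(s(t,r))² · β_t · β_r + s_t · s_r = 0. -/

import Mathlib

/-!
From `cosh s = cosh r * cosh t` we get `s = arcosh (cosh r * cosh t)`, hence
`s_t = cosh r * sinh t / sinh s` and `s_r = sinh r * cosh t / sinh s`. For
`β = arcsin (sinh r / sinh s)` one has `cos β = cosh r * |sinh t| / sinh s`, which gives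
`β_t = -sinh r * cosh r * cosh t * sinh t / (|sinh t| * sinh² s)` and `β_r = |sinh t| / sinh² s`.
The two products `sinh² s * β_t * β_r` and `s_t * s_r` are then opposite.
-/

/-- The hypotenuse `s(t, r)`: the unique nonnegative real with
`cosh (polarS t r) = cosh r * cosh t` (see `polarS_nonneg` and `cosh_polarS`). -/
noncomputable def polarS (t r : ℝ) : ℝ :=
  Real.arsinh (Real.sqrt ((Real.cosh r * Real.cosh t) ^ 2 - 1))

theorem polarS_nonneg (t r : ℝ) : 0 ≤ polarS t r :=
  Real.arsinh_nonneg_iff.mpr (Real.sqrt_nonneg _)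

theorem cosh_polarS (t r : ℝ) : Real.cosh (polarS t r) = Real.cosh r * Real.cosh t := by
  have h1 : (1 : ℝ) ≤ Real.cosh r * Real.cosh t := by
    nlinarith [Real.one_le_cosh r, Real.one_le_cosh t]
  have h2 : (0 : ℝ) ≤ (Real.cosh r * Real.cosh t) ^ 2 - 1 := by nlinarith
  rw [polarS, Real.cosh_arsinh, Real.sq_sqrt h2]
  rw [show (1 : ℝ) + ((Real.cosh r * Real.cosh t) ^ 2 - 1)
      = (Real.cosh r * Real.cosh t) ^ 2 by ring]
  exact Real.sqrt_sq (by linarith)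

/-- The angle `β(t, r) = arcsin (sinh r / sinh (s(t, r)))`. -/
noncomputable def polarBeta (t r : ℝ) : ℝ :=
  Real.arcsin (Real.sinh r / Real.sinh (polarS t r))

open Real

theorem HasDerivAt.arcosh {f : ℝ → ℝ} {f' x : ℝ} (hf : HasDerivAt f f' x) (hx : 1 < f x) :
    HasDerivAt (fun y => arcosh (f y)) (f' / √(f x ^ 2 - 1)) x := by
  rw [div_eq_inv_mul]
  exact (hasDerivAt_arcosh hx).comp x hf

theorem HasDerivAt.arcsin {f : ℝ → ℝ} {f' x : ℝ} (hf : HasDerivAt f f' x) (h₁ : f x ≠ -1)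
    (h₂ : f x ≠ 1) : HasDerivAt (fun y => arcsin (f y)) (f' / √(1 - f x ^ 2)) x := by
  rw [← one_div_mul_eq_div]
  exact (hasDerivAt_arcsin h₁ h₂).comp x hf

theorem polarS_eq_arcosh (t r : ℝ) : polarS t r = arcosh (cosh r * cosh t) := by
  rw [← cosh_polarS, arcosh_cosh (polarS_nonneg t r)]

theorem polarS_comm (t r : ℝ) : polarS t r = polarS r t := by
  rw [polarS, polarS, mul_comm]

theorem sinh_polarS_sq (t r : ℝ) : sinh (polarS t r) ^ 2 = (cosh r * cosh t) ^ 2 - 1 := by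
  rw [← cosh_polarS, cosh_sq]
  ring

theorem one_lt_cosh_mul_cosh {t : ℝ} (r : ℝ) (ht : t ≠ 0) : 1 < cosh r * cosh t := by
  nlinarith [one_le_cosh r, one_lt_cosh.mpr ht]

theorem sinh_polarS_pos {t r : ℝ} (h : 1 < cosh r * cosh t) : 0 < sinh (polarS t r) := by
  rw [sinh_pos_iff, polarS_eq_arcosh]
  exact arcosh_pos h

theorem hasDerivAt_polarS_left {t r : ℝ} (h : 1 < cosh r * cosh t) :
    HasDerivAt (fun t' => polarS t' r) (cosh r * sinh t / sinh (polarS t r)) t := by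
  simp only [polarS_eq_arcosh, sinh_arcosh h.le]
  exact ((hasDerivAt_cosh t).const_mul (cosh r)).arcosh h

theorem hasDerivAt_polarS_right {t r : ℝ} (h : 1 < cosh r * cosh t) :
    HasDerivAt (fun r' => polarS t r') (sinh r * cosh t / sinh (polarS t r)) r := by
  simp only [polarS_comm t]
  rw [mul_comm] at h
  simpa only [mul_comm (sinh r)] using hasDerivAt_polarS_left h

theorem one_sub_sq_sinh_div_sinh_polarS {t r : ℝ} (h : 1 < cosh r * cosh t) :
    1 - (sinh r / sinh (polarS t r)) ^ 2 = (cosh r * sinh t / sinh (polarS t r)) ^ 2 := by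
  have hS := (sinh_polarS_pos h).ne'
  field_simp
  rw [sinh_polarS_sq, mul_pow, cosh_sq r, cosh_sq t]
  ring

theorem sqrt_one_sub_sq_sinh_div_sinh_polarS {t r : ℝ} (h : 1 < cosh r * cosh t) :
    √(1 - (sinh r / sinh (polarS t r)) ^ 2) = cosh r * |sinh t| / sinh (polarS t r) := by
  rw [one_sub_sq_sinh_div_sinh_polarS h, sqrt_sq_eq_abs, abs_div, abs_mul,
    abs_of_pos (cosh_pos r), abs_of_pos (sinh_polarS_pos h)]

theorem abs_sinh_div_sinh_polarS_lt_one {t : ℝ} (r : ℝ) (ht : t ≠ 0) :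
    |sinh r / sinh (polarS t r)| < 1 := by
  have h := one_lt_cosh_mul_cosh r ht
  have hpos : 0 < (cosh r * sinh t / sinh (polarS t r)) ^ 2 := sq_pos_of_ne_zero <|
    div_ne_zero (mul_ne_zero (cosh_pos r).ne' (sinh_ne_zero.mpr ht)) (sinh_polarS_pos h).ne'
  rw [← sq_lt_one_iff_abs_lt_one]
  linarith [one_sub_sq_sinh_div_sinh_polarS h]

theorem hasDerivAt_polarBeta_left {t : ℝ} (r : ℝ) (ht : t ≠ 0) :
    HasDerivAt (fun t' => polarBeta t' r)
      (-(sinh r * cosh r * cosh t * sinh t) / (|sinh t| * sinh (polarS t r) ^ 2)) t := by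
  have h := one_lt_cosh_mul_cosh r ht
  have hS := sinh_polarS_pos h
  have hsin := abs_lt.mp (abs_sinh_div_sinh_polarS_lt_one r ht)
  have hu : HasDerivAt (fun t' => sinh r / sinh (polarS t' r)) _ t :=
    (hasDerivAt_const t (sinh r)).div (hasDerivAt_polarS_left h).sinh hS.ne'
  refine (hu.arcsin hsin.1.ne' hsin.2.ne).congr_deriv ?_
  rw [sqrt_one_sub_sq_sinh_div_sinh_polarS h, cosh_polarS]
  have hsinh : |sinh t| ≠ 0 := abs_ne_zero.mpr (sinh_ne_zero.mpr ht)
  field_simp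
  ring

theorem hasDerivAt_polarBeta_right {t : ℝ} (r : ℝ) (ht : t ≠ 0) :
    HasDerivAt (fun r' => polarBeta t r') (|sinh t| / sinh (polarS t r) ^ 2) r := by
  have h := one_lt_cosh_mul_cosh r ht
  have hS := sinh_polarS_pos h
  have hsin := abs_lt.mp (abs_sinh_div_sinh_polarS_lt_one r ht)
  have hu : HasDerivAt (fun r' => sinh r' / sinh (polarS t r')) _ r :=
    (hasDerivAt_sinh r).div (hasDerivAt_polarS_right h).sinh hS.ne'
  refine (hu.arcsin hsin.1.ne' hsin.2.ne).congr_deriv ?_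
  rw [sqrt_one_sub_sq_sinh_div_sinh_polarS h, cosh_polarS]
  have hsinh : |sinh t| ≠ 0 := abs_ne_zero.mpr (sinh_ne_zero.mpr ht)
  field_simp
  rw [sq_abs, sinh_polarS_sq, mul_pow, cosh_sq r, cosh_sq t]
  ring

theorem fermi_polar_mixed_component_general (t r : ℝ) (ht : t ≠ 0) :
    Real.sinh (polarS t r) ^ 2 * deriv (fun t' : ℝ => polarBeta t' r) t
          * deriv (fun r' : ℝ => polarBeta t r') r
        + deriv (fun t' : ℝ => polarS t' r) t * deriv (fun r' : ℝ => polarS t r') r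
      = 0 := by
  have h := one_lt_cosh_mul_cosh r ht
  have hS := (sinh_polarS_pos h).ne'
  have hsinh : |sinh t| ≠ 0 := abs_ne_zero.mpr (sinh_ne_zero.mpr ht)
  rw [(hasDerivAt_polarBeta_left r ht).deriv, (hasDerivAt_polarBeta_right r ht).deriv,
    (hasDerivAt_polarS_left h).deriv, (hasDerivAt_polarS_right h).deriv]
  field_simp
  ring

/-- Fix `t ≠ 0` and `r > 0`. With `s = polarS` and `β = polarBeta` the polar
coordinates in terms of the Fermi coordinates `(t, r)`, the mixed component of the
coordinate identity holds: `sinh (s(t,r))² * β_t * β_r + s_t * s_r = 0`,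
where subscripts denote partial derivatives at `(t, r)`. -/
theorem fermi_polar_mixed_component (t r : ℝ) (ht : t ≠ 0) (hr : 0 < r) :
    Real.sinh (polarS t r) ^ 2 * deriv (fun t' : ℝ => polarBeta t' r) t
          * deriv (fun r' : ℝ => polarBeta t r') r
        + deriv (fun t' : ℝ => polarS t' r) t * deriv (fun r' : ℝ => polarS t r') r
      = 0 :=
  fermi_polar_mixed_component_general t r ht
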